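/- Let S be a regular semigroup. The quotient 𝓛_G of T = {(e,u,f) : e, f ∈ E(S), e·u = u = u·f} by ∼ forms a category: its objects are the L-classes of idempotents of S, the ∼-class [(e,u,f)] is a morphism from the L-class of e to the L-class of f, composition is [(e,u,f)]·[(g,v,k)] = [(e, u·v, k)] whenever f L g (this is well defined and associative), and [(e,e,e)] is the identity morphism at the L-class of e. Moreover, for fixed idempotents e, f the map u ↦ [(e,u,f)] is a bijection from e·S·f = {u : eu = u = uf} onto the set of morphisms from the L-class of e to the L-class of f. -/

import Mathlib

/-! The only non-trivial identity is `u·g = u` whenever `u·f = u` and `f L g`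
(as `u·g = u·f·g = u·f`): it makes `[(e,u,f)]·[(g,v,k)]` independent of the
representatives. Everything else is associativity, and the bijection holds because
`(e,u,f) ∼ (g,v,h)` forces `u = e·v`. -/

/-- Green's `L` relation on idempotents: `e L g` iff `e·g = e` and `g·e = g`. -/
def LRel {S : Type*} [Semigroup S] (e g : S) : Prop := e * g = e ∧ g * e = g

/-- The set `T = {(e,u,f) : e, f ∈ E(S), e·u = u = u·f}` of triples. -/
def TSet (S : Type*) [Semigroup S] : Set (S × S × S) :=
  {t | t.1 * t.1 = t.1 ∧ t.2.2 * t.2.2 = t.2.2 ∧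
       t.1 * t.2.1 = t.2.1 ∧ t.2.1 * t.2.2 = t.2.1}

/-- The relation `∼` on triples: `(e,u,f) ∼ (g,v,h)` iff `e L g`, `f L h`
and `u = e·v`. -/
def simRel {S : Type*} [Semigroup S] (a b : S × S × S) : Prop :=
  LRel a.1 b.1 ∧ LRel a.2.2 b.2.2 ∧ a.2.1 = a.1 * b.2.1

section

variable {S : Type*} [Semigroup S]

namespace LRel

theorem symm {e g : S} (h : LRel e g) : LRel g e := ⟨h.2, h.1⟩

theorem mul_eq_of_mul_eq {u f g : S} (h : LRel f g) (hu : u * f = u) : u * g = u := by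
  rw [← hu, mul_assoc, h.1]

end LRel

theorem mul_mem_TSet {e u f g v k : S} (h₁ : (e, u, f) ∈ TSet S) (h₂ : (g, v, k) ∈ TSet S) :
    (e, u * v, k) ∈ TSet S :=
  ⟨h₁.1, h₂.2.1, by rw [← mul_assoc, h₁.2.2.1], by rw [mul_assoc, h₂.2.2.2]⟩

theorem simRel_mul {e u f e₁ u₁ f₁ g v k g₁ v₁ k₁ : S} (huf : u * f = u) (hfg : LRel f g)
    (h₁ : simRel (e, u, f) (e₁, u₁, f₁)) (h₂ : simRel (g, v, k) (g₁, v₁, k₁)) :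
    simRel (e, u * v, k) (e₁, u₁ * v₁, k₁) := by
  obtain ⟨hLe, -, hu : u = e * u₁⟩ := h₁
  obtain ⟨-, hLk, hv : v = g * v₁⟩ := h₂
  refine ⟨hLe, hLk, ?_⟩
  calc u * v = u * g * v₁ := by rw [hv, mul_assoc]
    _ = e * (u₁ * v₁) := by rw [hfg.mul_eq_of_mul_eq huf, hu, mul_assoc]

theorem simRel_of_eq_mul {e f x y : S} (he : e * e = e) (hf : f * f = f) (h : x = e * y) :
    simRel (e, x, f) (e, y, f) :=
  ⟨⟨he, he⟩, ⟨hf, hf⟩, h⟩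

theorem existsUnique_simRel {e f g v h : S} (he : e * e = e) (hvh : v * h = v)
    (hge : LRel g e) (hhf : LRel h f) :
    ∃! u : S, (e * u = u ∧ u * f = u) ∧ simRel (e, u, f) (g, v, h) :=
  ⟨e * v,
    ⟨⟨by rw [← mul_assoc, he], by rw [mul_assoc, hhf.mul_eq_of_mul_eq hvh]⟩,
      hge.symm, hhf.symm, rfl⟩,
    fun _ hu => hu.2.2.2⟩

end

theorem LG_is_category_general {S : Type*} [Semigroup S] :
    -- composition is well defined on `∼`-classes and lands in `T`
    (∀ e u f e₁ u₁ f₁ g v k g₁ v₁ k₁ : S,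
      (e, u, f) ∈ TSet S → (e₁, u₁, f₁) ∈ TSet S →
      (g, v, k) ∈ TSet S → (g₁, v₁, k₁) ∈ TSet S →
      simRel (e, u, f) (e₁, u₁, f₁) → simRel (g, v, k) (g₁, v₁, k₁) →
      LRel f g →
      (e, u * v, k) ∈ TSet S ∧ simRel (e, u * v, k) (e₁, u₁ * v₁, k₁)) ∧
    -- composition is associative
    (∀ e u f g v k l w m : S,
      (e, u, f) ∈ TSet S → (g, v, k) ∈ TSet S → (l, w, m) ∈ TSet S →
      LRel f g → LRel k l →
      simRel (e, (u * v) * w, m) (e, u * (v * w), m)) ∧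
    -- `[(e,e,e)]` is a left and right identity
    (∀ e u f : S, (e, u, f) ∈ TSet S →
      simRel (e, e * u, f) (e, u, f) ∧ simRel (e, u * f, f) (e, u, f)) ∧
    -- bijection between `e·S·f` and the morphisms from `[e]_L` to `[f]_L`
    (∀ e f g v h : S, e * e = e → f * f = f →
      (g, v, h) ∈ TSet S → LRel g e → LRel h f →
      ∃! u : S, (e * u = u ∧ u * f = u) ∧ simRel (e, u, f) (g, v, h)) := by
  refine ⟨?_, ?_, ?_, ?_⟩
  · intro e u f e₁ u₁ f₁ g v k g₁ v₁ k₁ h₁ _ h₂ _ hs₁ hs₂ hfg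
    exact ⟨mul_mem_TSet h₁ h₂, simRel_mul h₁.2.2.2 hfg hs₁ hs₂⟩
  · rintro e u f g v k l w m ⟨he, -, heu, -⟩ - ⟨-, hm, -, -⟩ - -
    exact simRel_of_eq_mul he hm (by rw [← mul_assoc e, heu, mul_assoc])
  · rintro e u f ⟨he, hf, heu, huf⟩
    exact ⟨simRel_of_eq_mul he hf rfl, simRel_of_eq_mul he hf (by rw [huf, heu])⟩
  · rintro e f g v h he - ⟨-, -, -, hvh⟩ hge hhf
    exact existsUnique_simRel he hvh hge hhf

/-- The quotient `𝓛_G` of `T` by `∼` is a category: composition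
`[(e,u,f)]·[(g,v,k)] = [(e,u·v,k)]` (defined when `f L g`) is well defined and
associative, `[(e,e,e)]` is the identity at the `L`-class of `e`, and for fixed
idempotents `e, f` the map `u ↦ [(e,u,f)]` is a bijection from
`e·S·f = {u : eu = u = uf}` onto the morphisms from the `L`-class of `e` to the
`L`-class of `f` (i.e. the `∼`-classes of triples `(g,v,h)` with `g L e` and
`h L f`). -/
theorem LG_is_category {S : Type*} [Semigroup S]
    (hreg : ∀ a : S, ∃ b : S, a * b * a = a ∧ b * a * b = b) :
    -- composition is well defined on `∼`-classes and lands in `T`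
    (∀ e u f e₁ u₁ f₁ g v k g₁ v₁ k₁ : S,
      (e, u, f) ∈ TSet S → (e₁, u₁, f₁) ∈ TSet S →
      (g, v, k) ∈ TSet S → (g₁, v₁, k₁) ∈ TSet S →
      simRel (e, u, f) (e₁, u₁, f₁) → simRel (g, v, k) (g₁, v₁, k₁) →
      LRel f g →
      (e, u * v, k) ∈ TSet S ∧ simRel (e, u * v, k) (e₁, u₁ * v₁, k₁)) ∧
    -- composition is associative
    (∀ e u f g v k l w m : S,
      (e, u, f) ∈ TSet S → (g, v, k) ∈ TSet S → (l, w, m) ∈ TSet S →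
      LRel f g → LRel k l →
      simRel (e, (u * v) * w, m) (e, u * (v * w), m)) ∧
    -- `[(e,e,e)]` is a left and right identity
    (∀ e u f : S, (e, u, f) ∈ TSet S →
      simRel (e, e * u, f) (e, u, f) ∧ simRel (e, u * f, f) (e, u, f)) ∧
    -- bijection between `e·S·f` and the morphisms from `[e]_L` to `[f]_L`
    (∀ e f g v h : S, e * e = e → f * f = f →
      (g, v, h) ∈ TSet S → LRel g e → LRel h f →
      ∃! u : S, (e * u = u ∧ u * f = u) ∧ simRel (e, u, f) (g, v, h)) :=
  LG_is_category_general
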